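/- Let n = 3 and let x : [t0, +∞) → ℝ be a Schwarzschild profile solution defined on all of [t0, +∞). Then ∫_{t0}^{+∞} [ x''(t)²/(1 + x'(t)²)³ + 1/(x(t)²·(1 + x'(t)²)) ] · x(t)·√(1 + x'(t)²) dt < +∞; that is, the squared norm of the Euclidean second fundamental form (k1² + k2², with k1 = −x''/(1+x'²)^{3/2} and k2 = 1/(x·√(1+x'²))) of the surface of revolution generated by x is integrable with respect to the Euclidean area element x·√(1+x'²) dt dθ, so the surface has finite total curvature. -/

import Mathlib

/-!
The second fundamental form is controlled by the derivative of `arctan x'`.  Along a profile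
the quantity `f = t x' - x` vanishes at `t0` and satisfies `f' = t x''`, while the ODE gives
`x'' = (n - 2)/x · (1 + x'²) > 0` wherever `f = 0`; hence `f ≥ 0` on `[t0, ∞)`, and then the
ODE makes `x''` positive.  Writing `G = x''/(1 + x'²) = f χ + (n - 2)/x`, the curvature density
is `(x G² + 1/x)/√(1 + x'²)`, and the estimate `χ x t ≤ n - 1` bounds it by `2 (n - 1) G`.
Finally `G = (arctan x')'` is nonnegative with `arctan x' < π/2`, so `G` is integrable.
-/

/-- The coefficient function χ(x,t) = 2m(n−1)/(2(x²+t²)^n + m(x²+t²)). -/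
noncomputable def schChi (n : ℕ) (m x t : ℝ) : ℝ :=
  2 * m * ((n : ℝ) - 1) / (2 * (x ^ 2 + t ^ 2) ^ n + m * (x ^ 2 + t ^ 2))

/-- A Schwarzschild profile solution on the interval [t0, t*), with t* ∈ ℝ ∪ {+∞}
encoded as an `EReal`.  The functions `x'` and `x''` are the first and second
derivatives of the twice continuously differentiable positive function `x`,
which solves the profile ODE with the free-boundary initial conditions. -/
structure IsSchwarzschildProfile (n : ℕ) (m R0 t0 : ℝ) (tstar : EReal)
    (x x' x'' : ℝ → ℝ) : Prop where
  hasDeriv : ∀ t : ℝ, t0 ≤ t → (t : EReal) < tstar → HasDerivAt x (x' t) t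
  hasDeriv2 : ∀ t : ℝ, t0 ≤ t → (t : EReal) < tstar → HasDerivAt x' (x'' t) t
  cont2 : ContinuousOn x'' {t : ℝ | t0 ≤ t ∧ (t : EReal) < tstar}
  pos : ∀ t : ℝ, t0 ≤ t → (t : EReal) < tstar → 0 < x t
  ode : ∀ t : ℝ, t0 ≤ t → (t : EReal) < tstar →
    x'' t = ((t * x' t - x t) * schChi n m (x t) t + ((n : ℝ) - 2) / x t)
      * (1 + (x' t) ^ 2)
  init : x t0 = Real.sqrt (R0 ^ 2 - t0 ^ 2)
  initDeriv : t0 * x' t0 = x t0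

open MeasureTheory Set Filter

theorem nonneg_of_hasDerivAt_pos_of_eq_zero {f f' : ℝ → ℝ} {a : ℝ}
    (hf : ∀ t ∈ Ici a, HasDerivAt f (f' t) t) (ha : 0 ≤ f a)
    (hzero : ∀ t ∈ Ici a, f t = 0 → 0 < f' t) : ∀ t ∈ Ici a, 0 ≤ f t := by
  intro t ht
  have hneg := image_le_of_deriv_right_lt_deriv_boundary (f := -f) (f' := -f') (B := 0) (B' := 0)
    (fun s hs => (hf s hs.1).neg.continuousAt.continuousWithinAt)
    (fun s hs => (hf s hs.1).neg.hasDerivWithinAt) (by simpa using ha)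
    (fun _ => hasDerivAt_const _ _)
    (fun s hs hfs => by simpa using hzero s hs.1 (neg_eq_zero.mp hfs)) ⟨ht, le_rfl⟩
  simpa using hneg

theorem integrableOn_Ici_of_hasDerivAt_nonneg_of_le {F g : ℝ → ℝ} {a C : ℝ}
    (hF : ∀ t ∈ Ici a, HasDerivAt F (g t) t) (hg : ∀ t ∈ Ici a, 0 ≤ g t)
    (hC : ∀ t ∈ Ici a, F t ≤ C) : IntegrableOn g (Ici a) := by
  have hint : ∀ b, IntegrableOn g (Ioc a b) := fun b =>
    intervalIntegral.integrableOn_deriv_of_nonneg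
      (fun t ht => (hF t ht.1).continuousAt.continuousWithinAt)
      (fun t ht => hF t ht.1.le) (fun t ht => hg t ht.1.le)
  rw [integrableOn_Ici_iff_integrableOn_Ioi]
  refine integrableOn_Ioi_of_intervalIntegral_norm_bounded (C - F a) a hint tendsto_id ?_
  filter_upwards [eventually_ge_atTop a] with b hb
  calc ∫ t in a..b, ‖g t‖ = ∫ t in a..b, g t :=
        intervalIntegral.integral_congr fun t ht =>
          Real.norm_of_nonneg (hg t (by rw [uIcc_of_le hb] at ht; exact ht.1))
    _ = F b - F a :=
        intervalIntegral.integral_eq_sub_of_hasDerivAt_of_le hb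
          (fun t ht => (hF t ht.1).continuousAt.continuousWithinAt) (fun t ht => hF t ht.1.le)
          ((intervalIntegrable_iff_integrableOn_Ioc_of_le hb).mpr (hint b))
    _ ≤ C - F a := by linarith [hC b hb]

theorem schChi_nonneg {n : ℕ} {m : ℝ} (hn : 1 ≤ n) (hm : 0 ≤ m) (a t : ℝ) :
    0 ≤ schChi n m a t := by
  have hn' : (1 : ℝ) ≤ n := by exact_mod_cast hn
  exact div_nonneg (by nlinarith) (add_nonneg (by positivity) (mul_nonneg hm (by positivity)))

theorem schChi_mul_mul_le {n : ℕ} {m a t : ℝ} (hn : 1 ≤ n) (hm : 0 ≤ m) (ha : 0 < a) :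
    schChi n m a t * a * t ≤ n - 1 := by
  have hn' : (0 : ℝ) ≤ n - 1 := by
    have : (1 : ℝ) ≤ n := by exact_mod_cast hn
    linarith
  have hr : 0 < a ^ 2 + t ^ 2 := by positivity
  have hD : m * (a ^ 2 + t ^ 2) ≤ 2 * (a ^ 2 + t ^ 2) ^ n + m * (a ^ 2 + t ^ 2) := by
    have := pow_pos hr n
    linarith
  have hχr : schChi n m a t * (a ^ 2 + t ^ 2) ≤ 2 * (n - 1) := by
    rw [schChi, div_mul_eq_mul_div, div_le_iff₀ (by positivity)]
    nlinarith [mul_le_mul_of_nonneg_left hD (mul_nonneg hm hn')]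
  nlinarith [mul_nonneg (schChi_nonneg hn hm a t) (sq_nonneg (a - t))]

theorem curvatureDensity_le_of_ode {n a b c t χ : ℝ} (hn : 3 ≤ n) (ha : 0 < a) (ht : 0 ≤ t)
    (hf : 0 ≤ t * b - a) (hχ : 0 ≤ χ) (hχat : χ * a * t ≤ n - 1)
    (hc : c = ((t * b - a) * χ + (n - 2) / a) * (1 + b ^ 2)) :
    (c ^ 2 / (1 + b ^ 2) ^ 3 + 1 / (a ^ 2 * (1 + b ^ 2))) * (a * √(1 + b ^ 2))
      ≤ 2 * (n - 1) * (c / (1 + b ^ 2)) := by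
  set s := √(1 + b ^ 2)
  set G := (t * b - a) * χ + (n - 2) / a
  have hb : 0 < 1 + b ^ 2 := by positivity
  have hs : s ^ 2 = 1 + b ^ 2 := Real.sq_sqrt hb.le
  have hs1 : 1 ≤ s := Real.one_le_sqrt.mpr (by nlinarith)
  have hbs : b ≤ s := Real.le_sqrt_of_sq_le (by linarith)
  have hG : 1 / a ≤ G := by
    have : 1 / a ≤ (n - 2) / a := div_le_div_of_nonneg_right (by linarith) ha.le
    nlinarith [mul_nonneg hf hχ]
  have haG : a * G ≤ (2 * n - 3) * s := by
    have hχa : 0 ≤ χ * a := mul_nonneg hχ ha.le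
    have : a * G = (t * b - a) * χ * a + (n - 2) := by
      simp only [G]
      field_simp
    rw [this]
    have hat : 0 ≤ χ * a * t := mul_nonneg hχa ht
    nlinarith [mul_nonneg (sub_nonneg.2 hbs) hat,
      mul_le_mul_of_nonneg_right hχat (by linarith : 0 ≤ s), mul_nonneg (sq_nonneg a) hχ]
  have hG0 : 0 ≤ G := le_trans (by positivity) hG
  calc _ = (a * G ^ 2 + 1 / a) / s := by
        rw [hc, ← hs]
        field_simp
    _ ≤ 2 * (n - 1) * G := by
        rw [div_le_iff₀ (by linarith)]
        nlinarith [mul_le_mul_of_nonneg_left haG hG0, mul_le_mul_of_nonneg_left hs1 hG0]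
    _ = 2 * (n - 1) * (c / (1 + b ^ 2)) := by rw [hc, mul_div_cancel_right₀ _ hb.ne']

namespace IsSchwarzschildProfile

variable {n : ℕ} {m R0 t0 : ℝ} {x x' x'' : ℝ → ℝ}

theorem continuousOn_secondDeriv (hx : IsSchwarzschildProfile n m R0 t0 ⊤ x x' x'') :
    ContinuousOn x'' (Ici t0) := by
  convert hx.cont2 using 1
  ext t
  simp [EReal.coe_lt_top]

theorem mul_deriv_sub_nonneg (hx : IsSchwarzschildProfile n m R0 t0 ⊤ x x' x'') (hn : 3 ≤ n)
    (ht0 : 0 < t0) {t : ℝ} (ht : t0 ≤ t) : 0 ≤ t * x' t - x t := by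
  refine nonneg_of_hasDerivAt_pos_of_eq_zero (f := fun s => s * x' s - x s)
    (f' := fun s => s * x'' s) (fun s hs => ?_) ?_ (fun s hs hzero => ?_) t ht
  · simpa using ((hasDerivAt_id' s).fun_mul (hx.hasDeriv2 s hs (EReal.coe_lt_top s))).fun_sub
      (hx.hasDeriv s hs (EReal.coe_lt_top s))
  · rw [hx.initDeriv, sub_self]
  · have hn' : (2 : ℝ) < n := by exact_mod_cast hn
    have hxs := hx.pos s hs (EReal.coe_lt_top s)
    rw [hx.ode s hs (EReal.coe_lt_top s), hzero, zero_mul, zero_add]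
    exact mul_pos (ht0.trans_le hs) (mul_pos (div_pos (by linarith) hxs) (by positivity))

theorem secondDeriv_pos (hx : IsSchwarzschildProfile n m R0 t0 ⊤ x x' x'') (hn : 3 ≤ n)
    (hm : 0 ≤ m) (ht0 : 0 < t0) {t : ℝ} (ht : t0 ≤ t) : 0 < x'' t := by
  have hn' : (2 : ℝ) < n := by exact_mod_cast hn
  have hfχ := mul_nonneg (hx.mul_deriv_sub_nonneg hn ht0 ht)
    (schChi_nonneg (n := n) (by omega) hm (x t) t)
  have hxt : 0 < (n - 2 : ℝ) / x t := div_pos (by linarith) (hx.pos t ht (EReal.coe_lt_top t))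
  rw [hx.ode t ht (EReal.coe_lt_top t)]
  exact mul_pos (by linarith) (by positivity)

theorem integrableOn_secondDeriv_div (hx : IsSchwarzschildProfile n m R0 t0 ⊤ x x' x'')
    (hn : 3 ≤ n) (hm : 0 ≤ m) (ht0 : 0 < t0) :
    IntegrableOn (fun t => x'' t / (1 + x' t ^ 2)) (Ici t0) :=
  integrableOn_Ici_of_hasDerivAt_nonneg_of_le (F := fun t => Real.arctan (x' t)) (C := Real.pi / 2)
    (fun t ht => by
      simpa [div_eq_inv_mul] using (hx.hasDeriv2 t ht (EReal.coe_lt_top t)).arctan)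
    (fun t ht => (div_pos (hx.secondDeriv_pos hn hm ht0 ht) (by positivity)).le)
    (fun t _ => (Real.arctan_lt_pi_div_two _).le)

theorem curvatureDensity_le (hx : IsSchwarzschildProfile n m R0 t0 ⊤ x x' x'') (hn : 3 ≤ n)
    (hm : 0 ≤ m) (ht0 : 0 < t0) {t : ℝ} (ht : t0 ≤ t) :
    ((x'' t) ^ 2 / (1 + (x' t) ^ 2) ^ 3 + 1 / ((x t) ^ 2 * (1 + (x' t) ^ 2)))
        * (x t * √(1 + (x' t) ^ 2))
      ≤ 2 * (n - 1) * (x'' t / (1 + x' t ^ 2)) := by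
  have hxt := hx.pos t ht (EReal.coe_lt_top t)
  exact curvatureDensity_le_of_ode (by exact_mod_cast hn) hxt (ht0.le.trans ht)
    (hx.mul_deriv_sub_nonneg hn ht0 ht) (schChi_nonneg (by omega) hm _ _)
    (schChi_mul_mul_le (by omega) hm hxt) (hx.ode t ht (EReal.coe_lt_top t))

theorem continuousOn_curvatureDensity (hx : IsSchwarzschildProfile n m R0 t0 ⊤ x x' x'') :
    ContinuousOn (fun t => ((x'' t) ^ 2 / (1 + (x' t) ^ 2) ^ 3
        + 1 / ((x t) ^ 2 * (1 + (x' t) ^ 2))) * (x t * √(1 + (x' t) ^ 2))) (Ici t0) := by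
  have hcx : ContinuousOn x (Ici t0) := fun t ht =>
    (hx.hasDeriv t ht (EReal.coe_lt_top t)).continuousAt.continuousWithinAt
  have hcx' : ContinuousOn x' (Ici t0) := fun t ht =>
    (hx.hasDeriv2 t ht (EReal.coe_lt_top t)).continuousAt.continuousWithinAt
  have hcx'' := hx.continuousOn_secondDeriv
  fun_prop (disch := first
    | intro t ht; have := hx.pos t ht (EReal.coe_lt_top t); positivity
    | intro t _; positivity)

theorem integrableOn_curvatureDensity (hx : IsSchwarzschildProfile n m R0 t0 ⊤ x x' x'')
    (hn : 3 ≤ n) (hm : 0 ≤ m) (ht0 : 0 < t0) :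
    IntegrableOn (fun t => ((x'' t) ^ 2 / (1 + (x' t) ^ 2) ^ 3
        + 1 / ((x t) ^ 2 * (1 + (x' t) ^ 2))) * (x t * √(1 + (x' t) ^ 2))) (Ici t0) := by
  refine ((hx.integrableOn_secondDeriv_div hn hm ht0).const_mul (2 * (n - 1 : ℝ))).mono'
    (hx.continuousOn_curvatureDensity.aestronglyMeasurable measurableSet_Ici) ?_
  filter_upwards [ae_restrict_mem measurableSet_Ici] with t ht
  have hxt := hx.pos t ht (EReal.coe_lt_top t)
  rw [Real.norm_of_nonneg (by positivity)]
  exact hx.curvatureDensity_le hn hm ht0 ht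

end IsSchwarzschildProfile

theorem statement19_general (m R0 t0 : ℝ) (hm : 0 < m) (ht0 : 0 < t0)
    (x x' x'' : ℝ → ℝ) (hx : IsSchwarzschildProfile 3 m R0 t0 ⊤ x x' x'') :
    IntegrableOn (fun t : ℝ =>
        ((x'' t) ^ 2 / (1 + (x' t) ^ 2) ^ 3
          + 1 / ((x t) ^ 2 * (1 + (x' t) ^ 2)))
        * (x t * Real.sqrt (1 + (x' t) ^ 2)))
      (Set.Ici t0) :=
  hx.integrableOn_curvatureDensity le_rfl hm.le ht0

/-- for n = 3 a Schwarzschild profile solution defined on all of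
[t0,+∞) generates a surface of revolution with finite Euclidean total
curvature: the squared norm k1² + k2² of the second fundamental form is
integrable against the area element x·√(1 + x'²) dt. -/
theorem statement19 (m R0 t0 : ℝ) (hm : 0 < m) (ht0 : 0 < t0) (htR : t0 < R0)
    (x x' x'' : ℝ → ℝ) (hx : IsSchwarzschildProfile 3 m R0 t0 ⊤ x x' x'') :
    IntegrableOn (fun t : ℝ =>
        ((x'' t) ^ 2 / (1 + (x' t) ^ 2) ^ 3
          + 1 / ((x t) ^ 2 * (1 + (x' t) ^ 2)))
        * (x t * Real.sqrt (1 + (x' t) ^ 2)))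
      (Set.Ici t0) :=
  statement19_general m R0 t0 hm ht0 x x' x'' hx
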